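/- arXiv:2304.06645 — 6 statements merged into one kernel-verified Lean document; each statement's English description precedes it below -/
import Mathlib

section
/- The AGM conjunction is monotone: if r_i ≤ s_i for all i ∈ {1,...,N} with all r_i, s_i ∈ [-1,1], then AGM_∧(r_1,...,r_N) ≤ AGM_∧(s_1,...,s_N). -/
/-! Each branch of `agmAnd` is monotone, the geometric one is nonnegative and the other
nonpositive. Since `r ≤ s`, positivity of all `r i` forces positivity of all `s i`, so the only
possible change of branch from `r` to `s` goes from the nonpositive one to the nonnegative one. -/

open Finset

noncomputable def agmAnd (N : ℕ) (r : Fin N → ℝ) : ℝ :=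
  if ∀ i, 0 < r i then (∏ i, (1 + r i)) ^ ((N : ℝ)⁻¹) - 1
  else (1 / (N : ℝ)) * ∑ i, min (r i) 0

section AgmAnd

variable {N : ℕ} {r s : Fin N → ℝ}

theorem agmAnd_of_forall_pos (hr : ∀ i, 0 < r i) :
    agmAnd N r = (∏ i, (1 + r i)) ^ ((N : ℝ)⁻¹) - 1 :=
  if_pos hr

theorem agmAnd_of_not_forall_pos (hr : ¬∀ i, 0 < r i) :
    agmAnd N r = (1 / (N : ℝ)) * ∑ i, min (r i) 0 :=
  if_neg hr

theorem agmAnd_nonpos_of_not_forall_pos (hr : ¬∀ i, 0 < r i) : agmAnd N r ≤ 0 := by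
  rw [agmAnd_of_not_forall_pos hr]
  exact mul_nonpos_of_nonneg_of_nonpos (by positivity)
    (sum_nonpos fun i _ => min_le_right _ _)

theorem agmAnd_nonneg_of_forall_pos (hr : ∀ i, 0 < r i) : 0 ≤ agmAnd N r := by
  have hprod : 1 ≤ ∏ i, (1 + r i) := one_le_prod fun i _ => by linarith [hr i]
  rw [agmAnd_of_forall_pos hr, sub_nonneg]
  exact Real.one_le_rpow hprod (by positivity)

theorem agmAnd_le_agmAnd_of_forall_pos (hr : ∀ i, 0 < r i) (hle : r ≤ s) :
    agmAnd N r ≤ agmAnd N s := by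
  have hs : ∀ i, 0 < s i := fun i => (hr i).trans_le (hle i)
  have hprod : ∏ i, (1 + r i) ≤ ∏ i, (1 + s i) :=
    prod_le_prod (fun i _ => by linarith [hr i]) fun i _ => by linarith [hle i]
  rw [agmAnd_of_forall_pos hr, agmAnd_of_forall_pos hs]
  gcongr
  exact prod_nonneg fun i _ => by linarith [hr i]

theorem agmAnd_le_agmAnd_of_not_forall_pos (hs : ¬∀ i, 0 < s i) (hle : r ≤ s) :
    agmAnd N r ≤ agmAnd N s := by
  have hr : ¬∀ i, 0 < r i := fun hr => hs fun i => (hr i).trans_le (hle i)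
  rw [agmAnd_of_not_forall_pos hr, agmAnd_of_not_forall_pos hs]
  gcongr with i
  exact hle i

end AgmAnd

theorem agmAnd_mono_general (N : ℕ) (r s : Fin N → ℝ)
    (hle : ∀ i, r i ≤ s i) :
    agmAnd N r ≤ agmAnd N s := by
  by_cases hr : ∀ i, 0 < r i
  · exact agmAnd_le_agmAnd_of_forall_pos hr hle
  by_cases hs : ∀ i, 0 < s i
  · exact (agmAnd_nonpos_of_not_forall_pos hr).trans (agmAnd_nonneg_of_forall_pos hs)
  · exact agmAnd_le_agmAnd_of_not_forall_pos hs hle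

theorem agmAnd_mono (N : ℕ) (r s : Fin N → ℝ)
    (hr : ∀ i, r i ∈ Set.Icc (-1 : ℝ) 1) (hs : ∀ i, s i ∈ Set.Icc (-1 : ℝ) 1)
    (hle : ∀ i, r i ≤ s i) :
    agmAnd N r ≤ agmAnd N s :=
  agmAnd_mono_general N r s hle
end

section
/- Agreement of sign between TWTL robustness and AGM robustness for hold: let v_t ∈ [-1,1] \ {0} for t ∈ [t₁, t₁+d]. Then min_t v_t > 0 if and only if AGM_∧(v_{t₁},...,v_{t₁+d}) > 0, and min_t v_t < 0 if and only if AGM_∧(v_{t₁},...,v_{t₁+d}) < 0. -/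
open Finset

/-! When every value is nonzero, `agmAnd` has the sign of the minimum: it is positive exactly when
all values are, and otherwise some value is negative and the averaged negative parts are
negative. Both `min` over the interval and `agmAnd` are nonzero, so the sign agreement for `< 0`
follows from the one for `0 <`. -/

section AgmAnd

variable {N : ℕ} {r : Fin N → ℝ}

lemma agmAnd_pos_of_forall_pos (hN : N ≠ 0) (hr : ∀ i, 0 < r i) : 0 < agmAnd N r := by
  have : NeZero N := ⟨hN⟩
  have hprod : 1 < ∏ i, (1 + r i) := by
    simpa using Finset.prod_lt_prod_of_nonempty (f := fun _ ↦ (1 : ℝ)) (g := fun i ↦ 1 + r i)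
      (fun _ _ ↦ one_pos) (fun i _ ↦ lt_add_of_pos_right 1 (hr i)) univ_nonempty
  rw [agmAnd, if_pos hr, sub_pos]
  exact Real.one_lt_rpow hprod (by positivity)

lemma agmAnd_nonpos_of_exists_nonpos (h : ∃ i, r i ≤ 0) : agmAnd N r ≤ 0 := by
  have hr : ¬ ∀ i, 0 < r i := by simpa using h
  rw [agmAnd, if_neg hr]
  exact mul_nonpos_of_nonneg_of_nonpos (by positivity)
    (sum_nonpos fun i _ ↦ min_le_right _ _)

lemma agmAnd_neg_of_exists_neg (h : ∃ i, r i < 0) : agmAnd N r < 0 := by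
  obtain ⟨i, hi⟩ := h
  have hr : ¬ ∀ i, 0 < r i := fun hr ↦ (hr i).not_gt hi
  have hN : (0 : ℝ) < N := Nat.cast_pos.mpr (Fin.pos i)
  rw [agmAnd, if_neg hr]
  refine mul_neg_of_pos_of_neg (by positivity) ?_
  calc ∑ j, min (r j) 0 < ∑ _j : Fin N, (0 : ℝ) :=
        sum_lt_sum (fun j _ ↦ min_le_right _ _) ⟨i, mem_univ i, min_lt_of_left_lt hi⟩
    _ = 0 := sum_const_zero

lemma agmAnd_pos_iff (hN : N ≠ 0) : 0 < agmAnd N r ↔ ∀ i, 0 < r i := by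
  refine ⟨fun h ↦ ?_, agmAnd_pos_of_forall_pos hN⟩
  by_contra hr
  push Not at hr
  exact (agmAnd_nonpos_of_exists_nonpos hr).not_gt h

lemma agmAnd_ne_zero (hN : N ≠ 0) (hr : ∀ i, r i ≠ 0) : agmAnd N r ≠ 0 := by
  by_cases hpos : ∀ i, 0 < r i
  · exact (agmAnd_pos_of_forall_pos hN hpos).ne'
  · push Not at hpos
    obtain ⟨i, hi⟩ := hpos
    exact (agmAnd_neg_of_exists_neg ⟨i, hi.lt_of_ne (hr i)⟩).ne

end AgmAnd

lemma forall_mem_Icc_add_iff_forall_fin {P : ℕ → Prop} {a d : ℕ} :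
    (∀ t ∈ Icc a (a + d), P t) ↔ ∀ i : Fin (d + 1), P (a + i) := by
  refine ⟨fun h i ↦ h _ (mem_Icc.mpr ⟨by omega, by omega⟩), fun h t ht ↦ ?_⟩
  obtain ⟨k, rfl⟩ := Nat.exists_eq_add_of_le (mem_Icc.mp ht).1
  exact h ⟨k, by grind⟩

theorem hold_sign_agreement_general (t₁ d : ℕ) (v : ℕ → ℝ)
    (hne : ∀ t ∈ Finset.Icc t₁ (t₁ + d), v t ≠ 0) :
    (0 < (Finset.Icc t₁ (t₁ + d)).inf' (Finset.nonempty_Icc.mpr (Nat.le_add_right t₁ d)) v ↔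
      0 < agmAnd (d + 1) (fun i => v (t₁ + i))) ∧
    ((Finset.Icc t₁ (t₁ + d)).inf' (Finset.nonempty_Icc.mpr (Nat.le_add_right t₁ d)) v < 0 ↔
      agmAnd (d + 1) (fun i => v (t₁ + i)) < 0) := by
  set m := (Icc t₁ (t₁ + d)).inf' (nonempty_Icc.mpr (Nat.le_add_right t₁ d)) v
  have hpos : 0 < m ↔ 0 < agmAnd (d + 1) (fun i => v (t₁ + i)) := by
    rw [lt_inf'_iff, forall_mem_Icc_add_iff_forall_fin, agmAnd_pos_iff d.succ_ne_zero]
  have hm : m ≠ 0 := by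
    obtain ⟨t, ht, hmt⟩ := exists_mem_eq_inf' (nonempty_Icc.mpr (Nat.le_add_right t₁ d)) v
    exact (show m = v t from hmt) ▸ hne t ht
  have hagm : agmAnd (d + 1) (fun i => v (t₁ + i)) ≠ 0 :=
    agmAnd_ne_zero d.succ_ne_zero (forall_mem_Icc_add_iff_forall_fin.mp hne)
  refine ⟨hpos, ?_⟩
  rw [← not_iff_not, not_lt, not_lt, hm.symm.le_iff_lt, hagm.symm.le_iff_lt, hpos]

theorem hold_sign_agreement (t₁ d : ℕ) (v : ℕ → ℝ)
    (hbnd : ∀ t ∈ Finset.Icc t₁ (t₁ + d), v t ∈ Set.Icc (-1 : ℝ) 1)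
    (hne : ∀ t ∈ Finset.Icc t₁ (t₁ + d), v t ≠ 0) :
    (0 < (Finset.Icc t₁ (t₁ + d)).inf' (Finset.nonempty_Icc.mpr (Nat.le_add_right t₁ d)) v ↔
      0 < agmAnd (d + 1) (fun i => v (t₁ + i))) ∧
    ((Finset.Icc t₁ (t₁ + d)).inf' (Finset.nonempty_Icc.mpr (Nat.le_add_right t₁ d)) v < 0 ↔
      agmAnd (d + 1) (fun i => v (t₁ + i)) < 0) :=
  hold_sign_agreement_general t₁ d v hne
end

section
/- Agreement of sign for the 'within' operator: for values w_t ∈ [-1,1] \ {0} indexed by t ∈ [a, b], max_t w_t > 0 iff AGM_∨(w_a,...,w_b) > 0, and max_t w_t < 0 iff AGM_∨(w_a,...,w_b) < 0. -/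
/-!
Since no `w t` vanishes, either some `w t` is positive or all are negative. In the first case
`AGM_∨` takes its averaging branch, a mean of nonnegative terms one of which is positive; in the
second each factor `1 - w t` exceeds `1`, so their geometric mean does too and `AGM_∨ < 0`.
-/

open Finset

noncomputable def agmOr (N : ℕ) (r : Fin N → ℝ) : ℝ :=
  if ∀ i, r i < 0 then 1 - (∏ i, (1 - r i)) ^ ((N : ℝ)⁻¹)
  else (1 / (N : ℝ)) * ∑ i, max (r i) 0

section agmOr

variable {N : ℕ} {r : Fin N → ℝ}

theorem agmOr_neg_of_forall_neg [NeZero N] (h : ∀ i, r i < 0) : agmOr N r < 0 := by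
  have hprod : 1 < ∏ i, (1 - r i) := by
    simpa using Finset.prod_lt_prod_of_nonempty (f := fun _ => (1 : ℝ)) (fun _ _ => one_pos)
      (fun i _ => by linarith [h i]) Finset.univ_nonempty
  have hroot : 1 < (∏ i, (1 - r i)) ^ ((N : ℝ)⁻¹) :=
    Real.one_lt_rpow hprod (by simpa using NeZero.pos N)
  rw [agmOr, if_pos h]
  linarith

theorem agmOr_pos_of_exists_pos (h : ∃ i, 0 < r i) : 0 < agmOr N r := by
  obtain ⟨i₀, hi₀⟩ := h
  have : NeZero N := ⟨by rintro rfl; exact i₀.elim0⟩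
  have hsum : 0 < ∑ i, max (r i) 0 :=
    Finset.sum_pos' (fun i _ => le_max_right _ _) ⟨i₀, mem_univ _, lt_max_of_lt_left hi₀⟩
  rw [agmOr, if_neg (fun hall => (hall i₀).not_gt hi₀)]
  exact mul_pos (by simpa using NeZero.pos N) hsum

theorem agmOr_neg_iff [NeZero N] (hr : ∀ i, r i ≠ 0) : agmOr N r < 0 ↔ ∀ i, r i < 0 := by
  refine ⟨fun hneg i => ?_, agmOr_neg_of_forall_neg⟩
  by_contra! hi
  exact (agmOr_pos_of_exists_pos ⟨i, (hi.lt_of_ne (hr i).symm)⟩).not_gt hneg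

theorem agmOr_pos_iff [NeZero N] (hr : ∀ i, r i ≠ 0) : 0 < agmOr N r ↔ ∃ i, 0 < r i := by
  refine ⟨fun hpos => ?_, agmOr_pos_of_exists_pos⟩
  by_contra! hall
  exact (agmOr_neg_of_forall_neg fun i => (hall i).lt_of_ne (hr i)).not_gt hpos

end agmOr

theorem exists_mem_Icc_iff_exists_fin {a b : ℕ} (hab : a ≤ b) (p : ℕ → Prop) :
    (∃ t ∈ Icc a b, p t) ↔ ∃ i : Fin (b - a + 1), p (a + i) := by
  constructor
  · rintro ⟨t, ht, hpt⟩
    rw [mem_Icc] at ht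
    exact ⟨⟨t - a, by omega⟩, by rwa [Nat.add_sub_cancel' ht.1]⟩
  · rintro ⟨i, hpi⟩
    exact ⟨a + i, mem_Icc.mpr ⟨by omega, by omega⟩, hpi⟩

theorem forall_mem_Icc_iff_forall_fin {a b : ℕ} (hab : a ≤ b) (p : ℕ → Prop) :
    (∀ t ∈ Icc a b, p t) ↔ ∀ i : Fin (b - a + 1), p (a + i) := by
  simpa using not_congr (exists_mem_Icc_iff_exists_fin hab fun t => ¬p t)

theorem within_sign_agreement_general (a b : ℕ) (hab : a ≤ b) (w : ℕ → ℝ)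
    (hne : ∀ t ∈ Finset.Icc a b, w t ≠ 0) :
    (0 < (Finset.Icc a b).sup' (Finset.nonempty_Icc.mpr hab) w ↔
      0 < agmOr (b - a + 1) (fun i => w (a + i))) ∧
    ((Finset.Icc a b).sup' (Finset.nonempty_Icc.mpr hab) w < 0 ↔
      agmOr (b - a + 1) (fun i => w (a + i)) < 0) := by
  have hne' : ∀ i : Fin (b - a + 1), w (a + i) ≠ 0 :=
    (forall_mem_Icc_iff_forall_fin hab _).mp hne
  constructor
  · rw [lt_sup'_iff, exists_mem_Icc_iff_exists_fin hab, agmOr_pos_iff hne']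
  · rw [sup'_lt_iff, forall_mem_Icc_iff_forall_fin hab, agmOr_neg_iff hne']

theorem within_sign_agreement (a b : ℕ) (hab : a ≤ b) (w : ℕ → ℝ)
    (hbnd : ∀ t ∈ Finset.Icc a b, w t ∈ Set.Icc (-1 : ℝ) 1)
    (hne : ∀ t ∈ Finset.Icc a b, w t ≠ 0) :
    (0 < (Finset.Icc a b).sup' (Finset.nonempty_Icc.mpr hab) w ↔
      0 < agmOr (b - a + 1) (fun i => w (a + i))) ∧
    ((Finset.Icc a b).sup' (Finset.nonempty_Icc.mpr hab) w < 0 ↔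
      agmOr (b - a + 1) (fun i => w (a + i)) < 0) :=
  within_sign_agreement_general a b hab w hne
end

section
/- Interval AGM arithmetic preserves membership: if x_i ∈ [l_i, u_i] ⊆ [-1,1] for i = 1,...,N, then AGM_∧(x_1,...,x_N) ∈ [AGM_∧(l_1,...,l_N), AGM_∧(u_1,...,u_N)] and AGM_∨(x_1,...,x_N) ∈ [AGM_∨(l_1,...,l_N), AGM_∨(u_1,...,u_N)]. -/
/-!
Both means are monotone for the pointwise order, which gives the interval bounds at once.
For `agmAnd`, positivity of all entries is preserved when the entries grow, so `a ≤ b` either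
stays in one branch (each branch is monotone) or passes from the arithmetic branch, which is
`≤ 0`, to the geometric branch, which is `≥ 0`. `agmOr` is the dual mean `r ↦ -agmAnd (-r)`.
-/

open Finset

theorem agmOr_eq_neg_agmAnd_neg (N : ℕ) (r : Fin N → ℝ) : agmOr N r = -agmAnd N (-r) := by
  simp only [agmOr, agmAnd, Pi.neg_apply, neg_pos, ← sub_eq_add_neg]
  split_ifs
  · ring
  · rw [← mul_neg, ← sum_neg_distrib]
    refine congrArg _ (sum_congr rfl fun i _ => ?_)
    simpa using (neg_eq_iff_eq_neg.mpr (min_neg_neg (r i) 0)).symm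

theorem agmAnd_monotone (N : ℕ) : Monotone (agmAnd N) := by
  intro a b hab
  have arith_nonpos : 1 / (N : ℝ) * ∑ i, min (a i) 0 ≤ 0 :=
    mul_nonpos_of_nonneg_of_nonpos (by positivity) (sum_nonpos fun i _ => min_le_right _ _)
  unfold agmAnd
  split_ifs with ha hb hb
  · have one_add_nonneg : ∀ i, 0 ≤ 1 + a i := fun i => by linarith [ha i]
    gcongr with i
    · exact prod_nonneg fun i _ => one_add_nonneg i
    · exact fun i _ => one_add_nonneg i
    · exact hab i
  · exact absurd (fun i => (ha i).trans_le (hab i)) hb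
  · have : 1 ≤ (∏ i, (1 + b i)) ^ (N : ℝ)⁻¹ :=
      Real.one_le_rpow (one_le_prod fun i _ => le_add_of_nonneg_right (hb i).le) (by positivity)
    linarith
  · gcongr with i
    exact hab i

theorem agmOr_monotone (N : ℕ) : Monotone (agmOr N) := by
  intro a b hab
  simp only [agmOr_eq_neg_agmAnd_neg, neg_le_neg_iff]
  exact agmAnd_monotone N (neg_le_neg hab)

theorem interval_agm_mem_general (N : ℕ) (x l u : Fin N → ℝ)
    (hmem : ∀ i, x i ∈ Set.Icc (l i) (u i)) :
    agmAnd N x ∈ Set.Icc (agmAnd N l) (agmAnd N u) ∧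
    agmOr N x ∈ Set.Icc (agmOr N l) (agmOr N u) := by
  have hlx : l ≤ x := fun i => (hmem i).1
  have hxu : x ≤ u := fun i => (hmem i).2
  exact ⟨⟨agmAnd_monotone N hlx, agmAnd_monotone N hxu⟩,
    ⟨agmOr_monotone N hlx, agmOr_monotone N hxu⟩⟩

theorem interval_agm_mem (N : ℕ) (x l u : Fin N → ℝ)
    (hl : ∀ i, -1 ≤ l i) (hu : ∀ i, u i ≤ 1)
    (hmem : ∀ i, x i ∈ Set.Icc (l i) (u i)) :
    agmAnd N x ∈ Set.Icc (agmAnd N l) (agmAnd N u) ∧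
    agmOr N x ∈ Set.Icc (agmOr N l) (agmOr N u) :=
  interval_agm_mem_general N x l u hmem
end

section
/- Soundness of the AGM hold monitor in the all-positive case: suppose η_t := η(o(t)) ∈ (0, η_max] for all observed t ∈ [t₁, t′] with t′ < t₁+d, where all pointwise AGM robustness values lie in [η_min, η_max] ⊆ [-1,1] with η_min < 0 < η_max. Then for any completion with pointwise values v_t ∈ [η_min, η_max] (v_t = η_t for t ≤ t′), AGM_∧(v_{t₁},...,v_{t₁+d}) is at most (∏_{t∈[t₁,t′]}(1+η_t) · (1+η_max)^{d - (t′-t₁)})^{1/(d+1)} - 1 and at least ((d - (t′-t₁))/(d+1))·η_min. -/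
/-!
In the all-positive branch of `agmAnd`, every factor `1 + v t` is bounded by its observed value
`1 + η t` or, on the `d - (t' - t₁)` unobserved steps, by `1 + ηmax`, and the `(d+1)`-th root is
monotone; that branch is moreover nonnegative, hence above the (nonpositive) lower bound.
In the other branch the value is nonpositive, hence below the upper bound, whose base is at
least `1`; and in the mean of the negative parts the observed (positive) steps contribute `0`
while each unobserved step contributes at least `ηmin`.
-/

open Finset

lemma agmAnd_le_rpow_sub_one {N : ℕ} {r : Fin N → ℝ} {B : ℝ} (hB : 1 ≤ B)
    (h : (∀ i, 0 < r i) → ∏ i, (1 + r i) ≤ B) : agmAnd N r ≤ B ^ (N : ℝ)⁻¹ - 1 := by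
  unfold agmAnd
  split_ifs with hpos
  · have hprod : 0 ≤ ∏ i, (1 + r i) := prod_nonneg fun i _ => by linarith [hpos i]
    gcongr
    exact h hpos
  · have hsum : ∑ i, min (r i) 0 ≤ 0 := sum_nonpos fun i _ => min_le_right _ _
    have hroot : 1 ≤ B ^ (N : ℝ)⁻¹ := Real.one_le_rpow hB (by positivity)
    nlinarith [show (0 : ℝ) ≤ 1 / N by positivity]

lemma le_agmAnd {N : ℕ} {r : Fin N → ℝ} {c : ℝ} (hc : c ≤ 0)
    (h : N * c ≤ ∑ i, min (r i) 0) : c ≤ agmAnd N r := by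
  unfold agmAnd
  split_ifs with hpos
  · have hprod : 1 ≤ ∏ i, (1 + r i) := Finset.one_le_prod fun i _ => by linarith [hpos i]
    linarith [Real.one_le_rpow hprod (by positivity : (0 : ℝ) ≤ (N : ℝ)⁻¹)]
  · obtain ⟨i, -⟩ := not_forall.1 hpos
    have hN : (0 : ℝ) < N := by exact_mod_cast i.pos
    calc c = 1 / N * (N * c) := by field_simp
      _ ≤ 1 / N * ∑ i, min (r i) 0 := by gcongr

section Window

variable {M : Type*} [CommMonoid M]

@[to_additive]
lemma prod_fin_add_eq_prod_Icc (f : ℕ → M) (a n : ℕ) :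
    ∏ i : Fin (n + 1), f (a + i) = ∏ t ∈ Icc a (a + n), f t := by
  rw [Fin.prod_univ_eq_prod_range (fun i => f (a + i)), ← Ico_add_one_right_eq_Icc,
    prod_Ico_eq_prod_range]
  congr 2
  omega

@[to_additive]
lemma prod_Icc_eq_prod_Icc_mul_prod_Ioc (f : ℕ → M) {a b c : ℕ} (hab : a ≤ b) (hbc : b ≤ c) :
    ∏ t ∈ Icc a c, f t = (∏ t ∈ Icc a b, f t) * ∏ t ∈ Ioc b c, f t := by
  rw [← prod_union (disjoint_left.2 fun t h h' => by simp only [mem_Icc, mem_Ioc] at h h'; omega)]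
  congr 1
  ext t
  simp only [mem_Icc, mem_Ioc, mem_union]
  omega

end Window

lemma card_Ioc_window {t₁ t' d : ℕ} (h₁ : t₁ ≤ t') : #(Ioc t' (t₁ + d)) = d - (t' - t₁) := by
  rw [Nat.card_Ioc]
  omega

lemma prod_window_le {t₁ t' d : ℕ} (h₁ : t₁ ≤ t') (h₂ : t' ≤ t₁ + d) {ηmax : ℝ} {η v : ℕ → ℝ}
    (hobs : ∀ t ∈ Icc t₁ t', 0 ≤ 1 + η t) (hagree : ∀ t ∈ Icc t₁ t', v t = η t)
    (hv : ∀ t ∈ Ioc t' (t₁ + d), 0 ≤ 1 + v t ∧ v t ≤ ηmax) :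
    ∏ i : Fin (d + 1), (1 + v (t₁ + i)) ≤
      (∏ t ∈ Icc t₁ t', (1 + η t)) * (1 + ηmax) ^ (d - (t' - t₁)) := by
  have hobs_eq : ∏ t ∈ Icc t₁ t', (1 + v t) = ∏ t ∈ Icc t₁ t', (1 + η t) :=
    prod_congr rfl fun t ht => by rw [hagree t ht]
  rw [prod_fin_add_eq_prod_Icc (fun t => 1 + v t), prod_Icc_eq_prod_Icc_mul_prod_Ioc _ h₁ h₂,
    hobs_eq, ← card_Ioc_window (d := d) h₁, ← prod_const]
  gcongr with t ht
  · exact prod_nonneg hobs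
  · exact fun t ht => (hv t ht).1
  · exact (hv t ht).2

lemma sum_window_min_zero_ge {t₁ t' d : ℕ} (h₁ : t₁ ≤ t') (h₂ : t' ≤ t₁ + d) {ηmin : ℝ}
    {η v : ℕ → ℝ} (hobs : ∀ t ∈ Icc t₁ t', 0 ≤ η t) (hagree : ∀ t ∈ Icc t₁ t', v t = η t)
    (hv : ∀ t ∈ Ioc t' (t₁ + d), ηmin ≤ v t) (hmin : ηmin ≤ 0) :
    ((d - (t' - t₁) : ℕ) : ℝ) * ηmin ≤ ∑ i : Fin (d + 1), min (v (t₁ + i)) 0 := by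
  have hobs_zero : ∑ t ∈ Icc t₁ t', min (v t) 0 = 0 :=
    sum_eq_zero fun t ht => by rw [hagree t ht, min_eq_right (hobs t ht)]
  rw [sum_fin_add_eq_sum_Icc (fun t => min (v t) 0), sum_Icc_eq_sum_Icc_add_sum_Ioc _ h₁ h₂,
    hobs_zero, zero_add, ← card_Ioc_window (d := d) h₁, ← nsmul_eq_mul]
  exact card_nsmul_le_sum _ _ _ fun t ht => le_min (hv t ht) hmin

theorem agm_hold_monitor_all_pos_general (t₁ t' d : ℕ) (h₁ : t₁ ≤ t') (h₂ : t' < t₁ + d)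
    (ηmin ηmax : ℝ) (hm1 : -1 ≤ ηmin) (hm2 : ηmin < 0) (hm3 : 0 < ηmax)
    (η v : ℕ → ℝ)
    (hobs : ∀ t ∈ Finset.Icc t₁ t', 0 < η t ∧ η t ≤ ηmax)
    (hagree : ∀ t ∈ Finset.Icc t₁ t', v t = η t)
    (hv : ∀ t ∈ Finset.Icc t₁ (t₁ + d), ηmin ≤ v t ∧ v t ≤ ηmax) :
    agmAnd (d + 1) (fun i => v (t₁ + i)) ≤
      ((∏ t ∈ Finset.Icc t₁ t', (1 + η t)) * (1 + ηmax) ^ (d - (t' - t₁))) ^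
        (((d : ℝ) + 1)⁻¹) - 1 ∧
    ((d - (t' - t₁) : ℕ) : ℝ) / ((d : ℝ) + 1) * ηmin ≤
      agmAnd (d + 1) (fun i => v (t₁ + i)) := by
  have hunobs : ∀ t ∈ Ioc t' (t₁ + d), ηmin ≤ v t ∧ v t ≤ ηmax := fun t ht =>
    hv t (Ioc_subset_Icc_self (Ioc_subset_Ioc_left h₁ ht))
  have hobs_pos : ∀ t ∈ Icc t₁ t', 0 ≤ η t := fun t ht => (hobs t ht).1.le
  constructor
  · have hbase : 1 ≤ (∏ t ∈ Icc t₁ t', (1 + η t)) * (1 + ηmax) ^ (d - (t' - t₁)) :=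
      one_le_mul_of_one_le_of_one_le (Finset.one_le_prod fun t ht => by linarith [hobs_pos t ht])
        (one_le_pow₀ (by linarith))
    convert agmAnd_le_rpow_sub_one hbase fun _ => prod_window_le h₁ h₂.le
      (fun t ht => by linarith [hobs_pos t ht]) hagree
      (fun t ht => ⟨by linarith [hunobs t ht], (hunobs t ht).2⟩) using 3
    push_cast
    ring
  · refine le_agmAnd (mul_nonpos_of_nonneg_of_nonpos (by positivity) hm2.le) ?_
    calc ((d + 1 : ℕ) : ℝ) * (((d - (t' - t₁) : ℕ) : ℝ) / ((d : ℝ) + 1) * ηmin)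
        = ((d - (t' - t₁) : ℕ) : ℝ) * ηmin := by push_cast; field_simp
      _ ≤ _ := sum_window_min_zero_ge h₁ h₂.le hobs_pos hagree (fun t ht => (hunobs t ht).1) hm2.le

theorem agm_hold_monitor_all_pos (t₁ t' d : ℕ) (h₁ : t₁ ≤ t') (h₂ : t' < t₁ + d)
    (ηmin ηmax : ℝ) (hm1 : -1 ≤ ηmin) (hm2 : ηmin < 0) (hm3 : 0 < ηmax) (hm4 : ηmax ≤ 1)
    (η v : ℕ → ℝ)
    (hobs : ∀ t ∈ Finset.Icc t₁ t', 0 < η t ∧ η t ≤ ηmax)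
    (hagree : ∀ t ∈ Finset.Icc t₁ t', v t = η t)
    (hv : ∀ t ∈ Finset.Icc t₁ (t₁ + d), ηmin ≤ v t ∧ v t ≤ ηmax) :
    agmAnd (d + 1) (fun i => v (t₁ + i)) ≤
      ((∏ t ∈ Finset.Icc t₁ t', (1 + η t)) * (1 + ηmax) ^ (d - (t' - t₁))) ^
        (((d : ℝ) + 1)⁻¹) - 1 ∧
    ((d - (t' - t₁) : ℕ) : ℝ) / ((d : ℝ) + 1) * ηmin ≤
      agmAnd (d + 1) (fun i => v (t₁ + i)) :=
  agm_hold_monitor_all_pos_general t₁ t' d h₁ h₂ ηmin ηmax hm1 hm2 hm3 η v hobs hagree hv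
end

section
/- Monotone convergence of the hold robustness monitor: for a fixed word o and times t₁ ≤ s ≤ s′ ≤ t₁ + d, the monitor interval at time s′, namely [ρ_⊥, min_{t∈[t₁,s′]} h(o(t))] (or the singleton {min_{t∈[t₁,t₁+d]} h(o(t))} when s′ = t₁+d), is contained in the monitor interval at time s; and when s′ = t₁ + d the interval equals the singleton containing the true robustness min_{t∈[t₁,t₁+d]} h(o(t)), provided ρ_⊥ ≤ h(o(t)) for all t. -/
open Finset

/-- Robustness monitor interval for `H^d π_A` given observations up to time `s`. -/
noncomputable def holdMonitor (o : ℕ → ℝ) (h : ℝ → ℝ) (t₁ d : ℕ) (ρbot : ℝ)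
    (s : ℕ) (hs : t₁ ≤ s) : Set ℝ :=
  if s < t₁ + d then
    Set.Icc ρbot ((Finset.Icc t₁ s).inf' (Finset.nonempty_Icc.mpr hs) (fun t => h (o t)))
  else
    {(Finset.Icc t₁ (t₁ + d)).inf' (Finset.nonempty_Icc.mpr (Nat.le_add_right t₁ d))
      (fun t => h (o t))}

/-! Before the horizon the upper end of the monitor interval is a minimum over a growing window,
hence nonincreasing in `s`; from the horizon on, the interval is the true robustness, which lies in
every earlier interval because `ρbot` bounds `h ∘ o` from below on the whole window. -/

section HoldMonitor

variable (o : ℕ → ℝ) (h : ℝ → ℝ) (t₁ d : ℕ) (ρbot : ℝ)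

theorem holdMonitor_of_lt {s : ℕ} (hs : t₁ ≤ s) (hlt : s < t₁ + d) :
    holdMonitor o h t₁ d ρbot s hs =
      Set.Icc ρbot ((Icc t₁ s).inf' (nonempty_Icc.mpr hs) (fun t => h (o t))) :=
  if_pos hlt

theorem holdMonitor_of_le {s : ℕ} (hs : t₁ ≤ s) (hle : t₁ + d ≤ s) :
    holdMonitor o h t₁ d ρbot s hs =
      {(Icc t₁ (t₁ + d)).inf' (nonempty_Icc.mpr (Nat.le_add_right t₁ d)) (fun t => h (o t))} :=
  if_neg hle.not_gt

theorem inf'_mem_holdMonitor {s : ℕ} (hs : t₁ ≤ s)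
    (hρ : ∀ t ∈ Icc t₁ (t₁ + d), ρbot ≤ h (o t)) :
    (Icc t₁ (t₁ + d)).inf' (nonempty_Icc.mpr (Nat.le_add_right t₁ d)) (fun t => h (o t)) ∈
      holdMonitor o h t₁ d ρbot s hs := by
  rcases lt_or_ge s (t₁ + d) with hlt | hle
  · rw [holdMonitor_of_lt o h t₁ d ρbot hs hlt]
    exact ⟨le_inf' _ _ hρ, inf'_mono _ (Icc_subset_Icc_right hlt.le) _⟩
  · rw [holdMonitor_of_le o h t₁ d ρbot hs hle]
    rfl

theorem holdMonitor_antitone {s s' : ℕ} (hs : t₁ ≤ s) (hss' : s ≤ s')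
    (hρ : ∀ t ∈ Icc t₁ (t₁ + d), ρbot ≤ h (o t)) :
    holdMonitor o h t₁ d ρbot s' (hs.trans hss') ⊆ holdMonitor o h t₁ d ρbot s hs := by
  rcases lt_or_ge s' (t₁ + d) with hlt | hle
  · rw [holdMonitor_of_lt o h t₁ d ρbot _ hlt,
      holdMonitor_of_lt o h t₁ d ρbot hs (hss'.trans_lt hlt)]
    exact Set.Icc_subset_Icc_right (inf'_mono _ (Icc_subset_Icc_right hss') _)
  · rw [holdMonitor_of_le o h t₁ d ρbot _ hle, Set.singleton_subset_iff]
    exact inf'_mem_holdMonitor o h t₁ d ρbot hs hρ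

end HoldMonitor

theorem hold_monitor_convergence_general (o : ℕ → ℝ) (h : ℝ → ℝ) (t₁ d : ℕ) (ρbot : ℝ)
    (s s' : ℕ) (hs : t₁ ≤ s) (hss' : s ≤ s')
    (hρ : ∀ t ∈ Finset.Icc t₁ (t₁ + d), ρbot ≤ h (o t)) :
    holdMonitor o h t₁ d ρbot s' (hs.trans hss') ⊆ holdMonitor o h t₁ d ρbot s hs ∧
    holdMonitor o h t₁ d ρbot (t₁ + d) (Nat.le_add_right t₁ d) =
      {(Finset.Icc t₁ (t₁ + d)).inf' (Finset.nonempty_Icc.mpr (Nat.le_add_right t₁ d))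
        (fun t => h (o t))} :=
  ⟨holdMonitor_antitone o h t₁ d ρbot hs hss' hρ, holdMonitor_of_le o h t₁ d ρbot _ le_rfl⟩

theorem hold_monitor_convergence (o : ℕ → ℝ) (h : ℝ → ℝ) (t₁ d : ℕ) (ρbot : ℝ)
    (s s' : ℕ) (hs : t₁ ≤ s) (hss' : s ≤ s') (hs' : s' ≤ t₁ + d)
    (hρ : ∀ t ∈ Finset.Icc t₁ (t₁ + d), ρbot ≤ h (o t)) :
    holdMonitor o h t₁ d ρbot s' (hs.trans hss') ⊆ holdMonitor o h t₁ d ρbot s hs ∧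
    holdMonitor o h t₁ d ρbot (t₁ + d) (Nat.le_add_right t₁ d) =
      {(Finset.Icc t₁ (t₁ + d)).inf' (Finset.nonempty_Icc.mpr (Nat.le_add_right t₁ d))
        (fun t => h (o t))} :=
  hold_monitor_convergence_general o h t₁ d ρbot s s' hs hss' hρ
end
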